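/- Suppose (ψ_D, ψ_Σ) ∈ V̂ × V̂ is a minimizer of J over V̂ × V̂ (it suffices that it is a local minimizer). Then the first-order optimality conditions hold: E*(E ψ_D − γ u(ψ_Σ)) + D̂* p̂ = 0 and E*(E ψ_Σ − E û(ψ_D)) + S* p = 0, where p ∈ V and p̂ ∈ V̂ are the adjoint states solving A* p = γ*(γ u(ψ_Σ) − E ψ_D) and Â* p̂ = E*(E û(ψ_D) − E ψ_Σ). -/

import Mathlib

open scoped RealInnerProductSpace

variable {V Vh H : Type*}
  [NormedAddCommGroup V] [InnerProductSpace ℝ V] [CompleteSpace V]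
  [NormedAddCommGroup Vh] [InnerProductSpace ℝ Vh] [CompleteSpace Vh]
  [NormedAddCommGroup H] [InnerProductSpace ℝ H] [CompleteSpace H]

/-- The state `u(ψ_Σ) = A⁻¹(S ψ_Σ + F)`. -/
noncomputable def stateU (A : V ≃L[ℝ] V) (S : Vh →L[ℝ] V) (F : V) (ψS : Vh) : V :=
  A.symm (S ψS + F)

/-- The state `û(ψ_D) = Â⁻¹(D̂ ψ_D + G)`. -/
noncomputable def stateUh (Ah : Vh ≃L[ℝ] Vh) (Dh : Vh →L[ℝ] Vh) (G : Vh) (ψD : Vh) : Vh :=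
  Ah.symm (Dh ψD + G)

/-- The cost functional `J(ψ_D, ψ_Σ) = ½‖γ u(ψ_Σ) − E ψ_D‖² + ½‖E û(ψ_D) − E ψ_Σ‖²`. -/
noncomputable def costJ (γ : V →L[ℝ] H) (E : Vh →L[ℝ] H)
    (A : V ≃L[ℝ] V) (Ah : Vh ≃L[ℝ] Vh) (S : Vh →L[ℝ] V) (Dh : Vh →L[ℝ] Vh)
    (F : V) (G : Vh) (ψD ψS : Vh) : ℝ :=
  (1 / 2) * ‖γ (stateU A S F ψS) - E ψD‖ ^ 2
    + (1 / 2) * ‖E (stateUh Ah Dh G ψD) - E ψS‖ ^ 2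

/-!
Restricting the local minimiser to either coordinate gives a local minimiser of a sum
`½‖f‖² + ½‖g‖²` of affine residuals, so the gradient `f'†(f x) + g'†(g x)` vanishes there. The
adjoint states absorb the inverses: `(Â⁻¹)* E* (E û − E ψ_Σ) = (Â⁻¹)* Â* p̂ = p̂`, and likewise for `p`.
-/

theorem HasFDerivAt.half_norm_sq {W K : Type*}
    [NormedAddCommGroup W] [NormedSpace ℝ W] [NormedAddCommGroup K] [InnerProductSpace ℝ K]
    {f : W → K} {f' : W →L[ℝ] K} {x : W} (hf : HasFDerivAt f f' x) :
    HasFDerivAt (fun y => (1 / 2 : ℝ) * ‖f y‖ ^ 2) ((innerSL ℝ (f x)).comp f') x :=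
  (hf.norm_sq.const_mul (1 / 2 : ℝ)).congr_fderiv (by ext; simp)

theorem IsLocalMin.adjoint_add_adjoint_eq_zero {W K L : Type*}
    [NormedAddCommGroup W] [InnerProductSpace ℝ W] [CompleteSpace W]
    [NormedAddCommGroup K] [InnerProductSpace ℝ K] [CompleteSpace K]
    [NormedAddCommGroup L] [InnerProductSpace ℝ L] [CompleteSpace L]
    {f : W → K} {g : W → L} {f' : W →L[ℝ] K} {g' : W →L[ℝ] L} {x : W}
    (hmin : IsLocalMin (fun y => (1 / 2 : ℝ) * ‖f y‖ ^ 2 + (1 / 2 : ℝ) * ‖g y‖ ^ 2) x)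
    (hf : HasFDerivAt f f' x) (hg : HasFDerivAt g g' x) :
    f'.adjoint (f x) + g'.adjoint (g x) = 0 := by
  have hzero := hmin.hasFDerivAt_eq_zero (hf.half_norm_sq.add hg.half_norm_sq)
  refine ext_inner_right ℝ fun v => ?_
  simpa [inner_add_left, ContinuousLinearMap.adjoint_inner_left] using congr($hzero v)

theorem ContinuousLinearEquiv.adjoint_symm_adjoint_apply {𝕜 W K : Type*} [RCLike 𝕜]
    [NormedAddCommGroup W] [InnerProductSpace 𝕜 W] [CompleteSpace W]
    [NormedAddCommGroup K] [InnerProductSpace 𝕜 K] [CompleteSpace K]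
    (A : W ≃L[𝕜] K) (p : K) :
    ContinuousLinearMap.adjoint (A.symm : K →L[𝕜] W)
      (ContinuousLinearMap.adjoint (A : W →L[𝕜] K) p) = p := by
  rw [← ContinuousLinearMap.comp_apply, ← ContinuousLinearMap.adjoint_comp]
  simp [ContinuousLinearMap.adjoint_id]

/-- If `(ψ_D, ψ_Σ)` is a (local) minimizer of `J`, then the first-order
optimality conditions hold: `E*(E ψ_D − γ u(ψ_Σ)) + D̂* p̂ = 0` and
`E*(E ψ_Σ − E û(ψ_D)) + S* p = 0`, with adjoint states
`A* p = γ*(γ u(ψ_Σ) − E ψ_D)` and `Â* p̂ = E*(E û(ψ_D) − E ψ_Σ)`. -/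
theorem costJ_first_order_optimality (γ : V →L[ℝ] H) (E : Vh →L[ℝ] H)
    (A : V ≃L[ℝ] V) (Ah : Vh ≃L[ℝ] Vh) (S : Vh →L[ℝ] V) (Dh : Vh →L[ℝ] Vh)
    (F : V) (G : Vh) (ψD ψS : Vh)
    (hmin : IsLocalMin (fun q : Vh × Vh => costJ γ E A Ah S Dh F G q.1 q.2) (ψD, ψS))
    (p : V) (ph : Vh)
    (hp : ContinuousLinearMap.adjoint (A : V →L[ℝ] V) p
        = ContinuousLinearMap.adjoint γ (γ (stateU A S F ψS) - E ψD))
    (hph : ContinuousLinearMap.adjoint (Ah : Vh →L[ℝ] Vh) ph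
        = ContinuousLinearMap.adjoint E (E (stateUh Ah Dh G ψD) - E ψS)) :
    ContinuousLinearMap.adjoint E (E ψD - γ (stateU A S F ψS))
        + ContinuousLinearMap.adjoint Dh ph = 0 ∧
    ContinuousLinearMap.adjoint E (E ψS - E (stateUh Ah Dh G ψD))
        + ContinuousLinearMap.adjoint S p = 0 := by
  have hminD : IsLocalMin (fun ψ => costJ γ E A Ah S Dh F G ψ ψS) ψD :=
    hmin.comp_continuous (g := fun ψ => (ψ, ψS)) (by fun_prop)
  have hminS : IsLocalMin (fun ψ => costJ γ E A Ah S Dh F G ψD ψ) ψS :=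
    hmin.comp_continuous (g := fun ψ => (ψD, ψ)) (by fun_prop)
  have hstateU : HasFDerivAt (stateU A S F) ((A.symm : V →L[ℝ] V) ∘L S) ψS :=
    (A.symm : V →L[ℝ] V).hasFDerivAt.comp ψS (S.hasFDerivAt.add_const F)
  have hstateUh : HasFDerivAt (stateUh Ah Dh G) ((Ah.symm : Vh →L[ℝ] Vh) ∘L Dh) ψD :=
    (Ah.symm : Vh →L[ℝ] Vh).hasFDerivAt.comp ψD (Dh.hasFDerivAt.add_const G)
  have gradD := hminD.adjoint_add_adjoint_eq_zero
    ((hasFDerivAt_const _ ψD).sub E.hasFDerivAt)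
    ((E.hasFDerivAt.comp ψD hstateUh).sub_const (E ψS))
  have gradS := hminS.adjoint_add_adjoint_eq_zero
    ((γ.hasFDerivAt.comp ψS hstateU).sub_const (E ψD))
    ((hasFDerivAt_const _ ψS).sub E.hasFDerivAt)
  constructor
  · simpa [ContinuousLinearMap.adjoint_comp, ← hph,
      ContinuousLinearEquiv.adjoint_symm_adjoint_apply] using gradD
  · rw [add_comm]
    simpa [ContinuousLinearMap.adjoint_comp, ← hp,
      ContinuousLinearEquiv.adjoint_symm_adjoint_apply] using gradS
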